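/- arXiv:2410.01959 — 4 statements merged into one kernel-verified Lean document; each statement's English description precedes it below -/
import Mathlib

section
/- Let c > 0 be a real number. For any query feature vector q ∈ ℝ^M and any two items j, k in the same query, given by scale-fixed features x^F_j, x^F_k ∈ ℝ^{K₁} and scale-sensitive features x^S_j, x^S_k ∈ ℝ^{K₂} with every coordinate strictly positive, the SIR score difference is invariant under uniform positive rescaling of the scale-sensitive features: f_n(q, x^F_j, c • x^S_j) − f_n(q, x^F_k, c • x^S_k) = f_n(q, x^F_j, x^S_j) − f_n(q, x^F_k, x^S_k), where c • x denotes the vector with coordinates c · x_m. -/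
open Finset

/-- The wide path: inner product of the weights `w` with the Kronecker product
of `f_s q` and the componentwise logarithm of the scale-sensitive features. -/
noncomputable def fw {M K₂ L : ℕ} (f_s : (Fin M → ℝ) → Fin L → ℝ)
    (w : Fin L × Fin K₂ → ℝ) (q : Fin M → ℝ) (xS : Fin K₂ → ℝ) : ℝ :=
  ∑ p : Fin L × Fin K₂, w p * f_s q p.1 * Real.log (xS p.2)

/-- The SIR scoring function: sum of the deep path and the wide path. -/
noncomputable def fn {M K₁ K₂ L : ℕ}
    (f_d : (Fin M → ℝ) → (Fin K₁ → ℝ) → ℝ)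
    (f_s : (Fin M → ℝ) → Fin L → ℝ) (w : Fin L × Fin K₂ → ℝ)
    (q : Fin M → ℝ) (xF : Fin K₁ → ℝ) (xS : Fin K₂ → ℝ) : ℝ :=
  f_d q xF + fw f_s w q xS

lemma fw_smul {M K₂ L : ℕ} (f_s : (Fin M → ℝ) → Fin L → ℝ)
    (w : Fin L × Fin K₂ → ℝ) (q : Fin M → ℝ) (xS : Fin K₂ → ℝ)
    (c : ℝ) (hc : 0 < c) (hx : ∀ m, 0 < xS m) :
    fw f_s w q (c • xS) =
      fw f_s w q xS + (∑ p : Fin L × Fin K₂, w p * f_s q p.1) * Real.log c := by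
  unfold fw
  rw [Finset.sum_mul, ← Finset.sum_add_distrib]
  refine Finset.sum_congr rfl fun p _ => ?_
  have : Real.log (c * xS p.2) = Real.log c + Real.log (xS p.2) :=
    Real.log_mul hc.ne' (hx p.2).ne'
  simp [this]
  ring

/-- the SIR score difference of two items in the same query is
invariant under uniform positive rescaling of the scale-sensitive features. -/
theorem sir_score_difference_scale_invariant
    {M K₁ K₂ L : ℕ}
    (f_d : (Fin M → ℝ) → (Fin K₁ → ℝ) → ℝ)
    (f_s : (Fin M → ℝ) → Fin L → ℝ) (w : Fin L × Fin K₂ → ℝ)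
    (c : ℝ) (hc : 0 < c)
    (q : Fin M → ℝ)
    (xFj xFk : Fin K₁ → ℝ) (xSj xSk : Fin K₂ → ℝ)
    (hj : ∀ m, 0 < xSj m) (hk : ∀ m, 0 < xSk m) :
    fn f_d f_s w q xFj (c • xSj) - fn f_d f_s w q xFk (c • xSk) =
      fn f_d f_s w q xFj xSj - fn f_d f_s w q xFk xSk := by
  unfold fn
  rw [fw_smul f_s w q xSj c hc hj, fw_smul f_s w q xSk c hc hk]
  ring
end

section
/- Let c > 0 be a real number and q ∈ ℝ^M a query feature vector. Then there exists a constant b ∈ ℝ (namely b = log(c) · ∑_{l,k} w_{l,k} · f_s(q)_l) such that for every item, i.e. for every x^F ∈ ℝ^{K₁} and every x^S ∈ ℝ^{K₂} with all coordinates strictly positive, f_n(q, x^F, c • x^S) = f_n(q, x^F, x^S) + b. That is, uniformly rescaling the scale-sensitive features of all items in a query shifts all SIR scores by a common constant. -/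
open Finset

/-- uniformly rescaling the scale-sensitive features of all items
in a query shifts all SIR scores by a common constant, namely
`b = log c * ∑_{l,k} w_{l,k} * f_s(q)_l`. -/
theorem sir_rescale_shifts_scores_by_constant
    {M K₁ K₂ L : ℕ}
    (f_d : (Fin M → ℝ) → (Fin K₁ → ℝ) → ℝ)
    (f_s : (Fin M → ℝ) → Fin L → ℝ) (w : Fin L × Fin K₂ → ℝ)
    (c : ℝ) (hc : 0 < c) (q : Fin M → ℝ) :
    ∃ b : ℝ, b = Real.log c * ∑ p : Fin L × Fin K₂, w p * f_s q p.1 ∧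
      ∀ (xF : Fin K₁ → ℝ) (xS : Fin K₂ → ℝ), (∀ m, 0 < xS m) →
        fn f_d f_s w q xF (c • xS) = fn f_d f_s w q xF xS + b := by
  refine ⟨_, rfl, fun xF xS hxS => ?_⟩
  simp only [fn, fw, Pi.smul_apply, smul_eq_mul]
  rw [Finset.mul_sum, add_assoc, ← Finset.sum_add_distrib]
  congr 1
  apply Finset.sum_congr rfl
  intro p _
  rw [Real.log_mul hc.ne' (hxS p.2).ne']
  ring
end

section
/- Let c > 0 be a real number, q ∈ ℝ^M a query feature vector, and let two items j, k in the same query be given by x^F_j, x^F_k ∈ ℝ^{K₁} and x^S_j, x^S_k ∈ ℝ^{K₂} with all coordinates strictly positive. Then the pairwise ordering of SIR scores is preserved under uniform rescaling of the scale-sensitive features: f_n(q, x^F_j, c • x^S_j) ≤ f_n(q, x^F_k, c • x^S_k) if and only if f_n(q, x^F_j, x^S_j) ≤ f_n(q, x^F_k, x^S_k), and likewise f_n(q, x^F_j, c • x^S_j) < f_n(q, x^F_k, c • x^S_k) if and only if f_n(q, x^F_j, x^S_j) < f_n(q, x^F_k, x^S_k). -/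
open Finset

/-- the pairwise ordering of SIR scores is preserved under uniform
positive rescaling of the scale-sensitive features. -/
theorem sir_pairwise_order_scale_invariant
    {M K₁ K₂ L : ℕ}
    (f_d : (Fin M → ℝ) → (Fin K₁ → ℝ) → ℝ)
    (f_s : (Fin M → ℝ) → Fin L → ℝ) (w : Fin L × Fin K₂ → ℝ)
    (c : ℝ) (hc : 0 < c)
    (q : Fin M → ℝ)
    (xFj xFk : Fin K₁ → ℝ) (xSj xSk : Fin K₂ → ℝ)
    (hj : ∀ m, 0 < xSj m) (hk : ∀ m, 0 < xSk m) :
    (fn f_d f_s w q xFj (c • xSj) ≤ fn f_d f_s w q xFk (c • xSk) ↔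
      fn f_d f_s w q xFj xSj ≤ fn f_d f_s w q xFk xSk) ∧
    (fn f_d f_s w q xFj (c • xSj) < fn f_d f_s w q xFk (c • xSk) ↔
      fn f_d f_s w q xFj xSj < fn f_d f_s w q xFk xSk) := by
  have hj' := fw_smul f_s w q xSj c hc hj
  have hk' := fw_smul f_s w q xSk c hc hk
  unfold fn
  rw [hj', hk']
  constructor <;> constructor <;> intro h <;> linarith
end

section
/- Let c ∈ ℝ^{K₂} be a vector with every coordinate strictly positive (a separate positive scaling factor for each scale-sensitive feature). For any query feature vector q ∈ ℝ^M and any two items j, k given by x^F_j, x^F_k ∈ ℝ^{K₁} and x^S_j, x^S_k ∈ ℝ^{K₂} with all coordinates strictly positive, the SIR score difference is invariant under componentwise rescaling: f_n(q, x^F_j, c ⊙ x^S_j) − f_n(q, x^F_k, c ⊙ x^S_k) = f_n(q, x^F_j, x^S_j) − f_n(q, x^F_k, x^S_k), where c ⊙ x denotes the componentwise (Hadamard) product with coordinates c_m · x_m. -/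
/-! The logarithm turns the Hadamard rescaling `x ↦ c ⊙ x` into the translation
`log x ↦ log x + log c`, and the wide path is linear in `log x`, so the rescaling adds
the same item-independent constant `f_w(q, c)` to every score; the deep path does not
see `x^S`. -/
open Finset

theorem fw_hadamard_mul {M K₂ L : ℕ} (f_s : (Fin M → ℝ) → Fin L → ℝ)
    (w : Fin L × Fin K₂ → ℝ) (q : Fin M → ℝ) {c xS : Fin K₂ → ℝ}
    (hc : ∀ m, c m ≠ 0) (hx : ∀ m, xS m ≠ 0) :
    fw f_s w q (fun m => c m * xS m) = fw f_s w q xS + fw f_s w q c := by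
  simp only [fw, ← sum_add_distrib]
  refine sum_congr rfl fun p _ => ?_
  rw [Real.log_mul (hc p.2) (hx p.2)]
  ring

theorem fn_hadamard_mul {M K₁ K₂ L : ℕ}
    (f_d : (Fin M → ℝ) → (Fin K₁ → ℝ) → ℝ)
    (f_s : (Fin M → ℝ) → Fin L → ℝ) (w : Fin L × Fin K₂ → ℝ)
    (q : Fin M → ℝ) (xF : Fin K₁ → ℝ) {c xS : Fin K₂ → ℝ}
    (hc : ∀ m, c m ≠ 0) (hx : ∀ m, xS m ≠ 0) :
    fn f_d f_s w q xF (fun m => c m * xS m) = fn f_d f_s w q xF xS + fw f_s w q c := by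
  rw [fn, fn, fw_hadamard_mul f_s w q hc hx, add_assoc]

/-- the SIR score difference of two items in the same query is
invariant under componentwise (Hadamard) rescaling of the scale-sensitive
features by any vector `c` with strictly positive coordinates. -/
theorem sir_score_difference_hadamard_scale_invariant
    {M K₁ K₂ L : ℕ}
    (f_d : (Fin M → ℝ) → (Fin K₁ → ℝ) → ℝ)
    (f_s : (Fin M → ℝ) → Fin L → ℝ) (w : Fin L × Fin K₂ → ℝ)
    (c : Fin K₂ → ℝ) (hc : ∀ m, 0 < c m)
    (q : Fin M → ℝ)
    (xFj xFk : Fin K₁ → ℝ) (xSj xSk : Fin K₂ → ℝ)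
    (hj : ∀ m, 0 < xSj m) (hk : ∀ m, 0 < xSk m) :
    fn f_d f_s w q xFj (fun m => c m * xSj m) -
        fn f_d f_s w q xFk (fun m => c m * xSk m) =
      fn f_d f_s w q xFj xSj - fn f_d f_s w q xFk xSk := by
  have hc' : ∀ m, c m ≠ 0 := fun m => (hc m).ne'
  rw [fn_hadamard_mul f_d f_s w q xFj hc' fun m => (hj m).ne',
    fn_hadamard_mul f_d f_s w q xFk hc' fun m => (hk m).ne', add_sub_add_right_eq_sub]
end
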